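/- arXiv:1606.04722 — 3 statements merged into one kernel-verified Lean document; each statement's English description precedes it below -/
import Mathlib

section
/- Let ℓ : ℝ^d → ℝ be a differentiable, convex, β-smooth function (β > 0), i.e., its gradient is β-Lipschitz. Then for any step size η with 0 ≤ η ≤ 2/β, the gradient update operator G(w) = w − η∇ℓ(w) is 1-expansive: for all u, v ∈ ℝ^d, ‖G(u) − G(v)‖ ≤ ‖u − v‖. -/
open scoped RealInnerProductSpace

/-!
Convexity gives `ℓ u ≥ ℓ v + ⟪g v, u - v⟫` and `β`-smoothness gives the quadratic upper bound
`ℓ u ≤ ℓ v + ⟪g v, u - v⟫ + β/2 ‖u - v‖²`. Chaining the two through the point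
`v - β⁻¹ (g v - g u)` yields `ℓ u - ℓ v ≤ ⟪g u, u - v⟫ - (2β)⁻¹ ‖g u - g v‖²`, and adding this to
its mirror image gives co-coercivity, `β⁻¹ ‖g u - g v‖² ≤ ⟪g u - g v, u - v⟫`. Expanding
`‖(u - v) - η (g u - g v)‖²` then shows it is at most `‖u - v‖² - η (2 - ηβ) ⟪g u - g v, u - v⟫`.
-/

section GradientInequalities

variable {F : Type*} [NormedAddCommGroup F] [InnerProductSpace ℝ F] [CompleteSpace F]
  {f : F → ℝ} {G : F → F} {f' x d : F} {β : ℝ}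

theorem HasGradientAt.hasDerivAt_add_smul {t : ℝ} (hf : HasGradientAt f f' (x + t • d)) :
    HasDerivAt (fun s : ℝ => f (x + s • d)) ⟪f', d⟫ t := by
  have hline : HasDerivAt (fun s : ℝ => x + s • d) d t := by
    simpa using ((hasDerivAt_id t).smul_const d).const_add x
  exact (hasGradientAt_iff_hasFDerivAt.mp hf).comp_hasDerivAt t hline

theorem ConvexOn.add_inner_gradient_le (hconv : ConvexOn ℝ Set.univ f)
    (hf : HasGradientAt f f' x) (y : F) :
    f x + ⟪f', y - x⟫ ≤ f y := by
  have hline : ConvexOn ℝ Set.univ (fun s : ℝ => f (x + s • (y - x))) := by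
    have := hconv.comp_affineMap (AffineMap.lineMap x y : ℝ →ᵃ[ℝ] F)
    simpa [Function.comp_def, AffineMap.lineMap_apply_module', add_comm] using this
  have hder : HasDerivAt (fun s : ℝ => f (x + s • (y - x))) ⟪f', y - x⟫ 0 :=
    HasGradientAt.hasDerivAt_add_smul (by simpa using hf)
  have hslope := hline.le_slope_of_hasDerivAt (Set.mem_univ 0) (Set.mem_univ 1) one_pos hder
  simp only [slope_def_field, one_smul, zero_smul, add_zero, add_sub_cancel, sub_zero,
    div_one] at hslope
  linarith

theorem le_add_inner_gradient_add_half_mul_norm_sq (hG : ∀ w, HasGradientAt f (G w) w)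
    (hs : ∀ u v, ‖G u - G v‖ ≤ β * ‖u - v‖) (x y : F) :
    f y ≤ f x + ⟪G x, y - x⟫ + β / 2 * ‖y - x‖ ^ 2 := by
  set d := y - x
  set h : ℝ → ℝ := fun t => f (x + t • d) - (t * ⟪G x, d⟫ + β / 2 * t ^ 2 * ‖d‖ ^ 2)
  have hder : ∀ t : ℝ, HasDerivAt h (⟪G (x + t • d), d⟫ - ⟪G x, d⟫ - β * t * ‖d‖ ^ 2) t := by
    intro t
    have hquad : HasDerivAt (fun t : ℝ => t * ⟪G x, d⟫ + β / 2 * t ^ 2 * ‖d‖ ^ 2)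
        (⟪G x, d⟫ + β * t * ‖d‖ ^ 2) t :=
      (((hasDerivAt_id t).mul_const ⟪G x, d⟫).add
        (((hasDerivAt_pow 2 t).const_mul (β / 2)).mul_const (‖d‖ ^ 2))).congr_deriv
        (by push_cast; ring)
    exact ((hG (x + t • d)).hasDerivAt_add_smul.sub hquad).congr_deriv (by ring)
  have hanti : AntitoneOn h (Set.Ici 0) := by
    refine antitoneOn_of_hasDerivWithinAt_nonpos (convex_Ici 0)
      (fun t _ => (hder t).continuousAt.continuousWithinAt)
      (fun t _ => (hder t).hasDerivWithinAt) fun t ht => ?_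
    rw [interior_Ici, Set.mem_Ioi] at ht
    have hinc : ⟪G (x + t • d) - G x, d⟫ ≤ β * t * ‖d‖ ^ 2 :=
      calc ⟪G (x + t • d) - G x, d⟫
          ≤ ‖G (x + t • d) - G x‖ * ‖d‖ := real_inner_le_norm _ _
        _ ≤ β * ‖t • d‖ * ‖d‖ := by
          gcongr
          simpa using hs (x + t • d) x
        _ = β * t * ‖d‖ ^ 2 := by rw [norm_smul, Real.norm_of_nonneg ht.le]; ring
    rw [inner_sub_left] at hinc
    linarith
  have h10 := hanti (Set.mem_Ici.mpr le_rfl) (Set.mem_Ici.mpr zero_le_one) zero_le_one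
  simp only [h, d, one_smul, zero_smul, add_zero, add_sub_cancel, zero_mul, one_mul,
    sub_zero, one_pow, ne_eq, OfNat.ofNat_ne_zero, not_false_eq_true, zero_pow,
    mul_zero] at h10
  linarith

theorem ConvexOn.sub_le_inner_gradient_sub_norm_sq (hconv : ConvexOn ℝ Set.univ f)
    (hG : ∀ w, HasGradientAt f (G w) w) (hβ : β ≠ 0)
    (hs : ∀ u v, ‖G u - G v‖ ≤ β * ‖u - v‖) (x y : F) :
    f x - f y ≤ ⟪G x, x - y⟫ - β⁻¹ / 2 * ‖G x - G y‖ ^ 2 := by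
  -- `z` is the point where the quadratic upper bound at `y` for `f - ⟪G x, ·⟫` is minimal.
  set z := y - β⁻¹ • (G y - G x)
  have hconv_z := hconv.add_inner_gradient_le (hG x) z
  have hdescent := le_add_inner_gradient_add_half_mul_norm_sq hG hs y z
  have hzy : z - y = -(β⁻¹ • (G y - G x)) := by simp [z]
  have hinner : ⟪G x, x - y⟫ + ⟪G y - G x, z - y⟫ = -⟪G x, z - x⟫ + ⟪G y, z - y⟫ := by
    simp only [inner_sub_left, inner_sub_right]; ring
  have hcross : ⟪G y - G x, z - y⟫ = -β⁻¹ * ‖G x - G y‖ ^ 2 := by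
    rw [hzy, inner_neg_right, real_inner_smul_right, real_inner_self_eq_norm_sq, norm_sub_rev]
    ring
  have hsq : ‖z - y‖ ^ 2 = β⁻¹ ^ 2 * ‖G x - G y‖ ^ 2 := by
    rw [hzy, norm_neg, norm_smul, norm_sub_rev, Real.norm_eq_abs, mul_pow, sq_abs]
  have hcoef : β / 2 * β⁻¹ ^ 2 = β⁻¹ / 2 := by field_simp
  rw [hsq, ← mul_assoc, hcoef] at hdescent
  linarith

theorem ConvexOn.inv_mul_norm_sq_le_inner_gradient (hconv : ConvexOn ℝ Set.univ f)
    (hG : ∀ w, HasGradientAt f (G w) w) (hβ : β ≠ 0)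
    (hs : ∀ u v, ‖G u - G v‖ ≤ β * ‖u - v‖) (u v : F) :
    β⁻¹ * ‖G u - G v‖ ^ 2 ≤ ⟪G u - G v, u - v⟫ := by
  have huv := hconv.sub_le_inner_gradient_sub_norm_sq hG hβ hs u v
  have hvu := hconv.sub_le_inner_gradient_sub_norm_sq hG hβ hs v u
  have hinner : ⟪G u - G v, u - v⟫ = ⟪G u, u - v⟫ + ⟪G v, v - u⟫ := by
    rw [inner_sub_left, ← neg_sub u v, inner_neg_right]; ring
  rw [norm_sub_rev (G v)] at hvu
  linarith

end GradientInequalities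

theorem norm_sub_smul_le_of_inv_mul_norm_sq_le_inner {E : Type*} [NormedAddCommGroup E]
    [InnerProductSpace ℝ E] {a Δ : E} {β η : ℝ} (hβ : 0 < β) (hη0 : 0 ≤ η) (hη : η ≤ 2 / β)
    (hco : β⁻¹ * ‖Δ‖ ^ 2 ≤ ⟪Δ, a⟫) :
    ‖a - η • Δ‖ ≤ ‖a‖ := by
  have hco' : ‖Δ‖ ^ 2 ≤ β * ⟪Δ, a⟫ := by
    rwa [inv_mul_le_iff₀ hβ] at hco
  have hηβ : η * β ≤ 2 := (le_div_iff₀ hβ).mp hη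
  have hinner_nonneg : 0 ≤ ⟪Δ, a⟫ := by nlinarith [sq_nonneg ‖Δ‖]
  have hexpand : ‖a - η • Δ‖ ^ 2 = ‖a‖ ^ 2 - 2 * η * ⟪Δ, a⟫ + η ^ 2 * ‖Δ‖ ^ 2 := by
    rw [norm_sub_sq_real, real_inner_smul_right, norm_smul, Real.norm_of_nonneg hη0,
      real_inner_comm]
    ring
  have hsq : ‖a - η • Δ‖ ^ 2 ≤ ‖a‖ ^ 2 :=
    calc ‖a - η • Δ‖ ^ 2 ≤ ‖a‖ ^ 2 - 2 * η * ⟪Δ, a⟫ + η ^ 2 * (β * ⟪Δ, a⟫) := by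
          rw [hexpand]; gcongr
      _ = ‖a‖ ^ 2 - η * (2 - η * β) * ⟪Δ, a⟫ := by ring
      _ ≤ ‖a‖ ^ 2 := by
          have : 0 ≤ η * (2 - η * β) * ⟪Δ, a⟫ := by
            apply mul_nonneg (mul_nonneg hη0 (by linarith)) hinner_nonneg
          linarith
  exact (sq_le_sq₀ (norm_nonneg _) (norm_nonneg _)).mp hsq

/-- If `ℓ` is differentiable (with gradient `g`), convex, and `β`-smooth (`β > 0`),
then for any step size `0 ≤ η ≤ 2/β` the gradient update `w ↦ w - η • g w`
is 1-expansive. -/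
theorem stmt0 {d : ℕ} (ℓ : EuclideanSpace ℝ (Fin d) → ℝ)
    (g : EuclideanSpace ℝ (Fin d) → EuclideanSpace ℝ (Fin d))
    (hg : ∀ w, HasGradientAt ℓ (g w) w)
    (hconv : ConvexOn ℝ Set.univ ℓ)
    (β : ℝ) (hβ : 0 < β)
    (hsmooth : ∀ u v, ‖g u - g v‖ ≤ β * ‖u - v‖)
    (η : ℝ) (hη0 : 0 ≤ η) (hη : η ≤ 2 / β) :
    ∀ u v : EuclideanSpace ℝ (Fin d),
      ‖(u - η • g u) - (v - η • g v)‖ ≤ ‖u - v‖ := by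
  intro u v
  have hstep : (u - η • g u) - (v - η • g v) = (u - v) - η • (g u - g v) := by
    rw [smul_sub]; abel
  rw [hstep]
  exact norm_sub_smul_le_of_inv_mul_norm_sq_le_inner hβ hη0 hη
    (hconv.inv_mul_norm_sq_le_inner_gradient hg hβ.ne' hsmooth u v)
end

section
/- (Growth recursion, differing-update case.) Let G, G' : ℝ^d → ℝ^d be operators that are each σ-bounded, and suppose G is ρ-expansive. Then for any w, w' ∈ ℝ^d, ‖G(w) − G'(w')‖ ≤ min(ρ, 1)·‖w − w'‖ + 2σ. Consequently, if w_t = G(w_{t−1}) and w'_t = G'(w'_{t−1}), then δ_t ≤ min(ρ, 1) δ_{t−1} + 2σ, where δ_t = ‖w_t − w'_t‖. -/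
section GrowthRecursion

variable {E : Type*} [SeminormedAddCommGroup E] {G G' : E → E} {ρ σ : ℝ}

theorem norm_apply_sub_apply_le_of_displacement_le (hG : ∀ w, ‖G w - w‖ ≤ σ)
    (hG' : ∀ w, ‖G' w - w‖ ≤ σ) (w w' : E) :
    ‖G w - G' w'‖ ≤ ‖w - w'‖ + 2 * σ := by
  calc ‖G w - G' w'‖ = ‖(G w - w) + (w - w') + (w' - G' w')‖ := by congr 1; abel
    _ ≤ ‖G w - w‖ + ‖w - w'‖ + ‖G' w' - w'‖ := by
      rw [norm_sub_rev (G' w')]; exact norm_add₃_le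
    _ ≤ ‖w - w'‖ + 2 * σ := by linarith [hG w, hG' w']

theorem norm_apply_sub_apply_le_of_expansive (hGexp : ∀ u v, ‖G u - G v‖ ≤ ρ * ‖u - v‖)
    (hG : ∀ w, ‖G w - w‖ ≤ σ) (hG' : ∀ w, ‖G' w - w‖ ≤ σ) (w w' : E) :
    ‖G w - G' w'‖ ≤ ρ * ‖w - w'‖ + 2 * σ := by
  calc ‖G w - G' w'‖ = ‖(G w - G w') + (G w' - w') + (w' - G' w')‖ := by congr 1; abel
    _ ≤ ‖G w - G w'‖ + ‖G w' - w'‖ + ‖G' w' - w'‖ := by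
      rw [norm_sub_rev (G' w')]; exact norm_add₃_le
    _ ≤ ρ * ‖w - w'‖ + 2 * σ := by linarith [hGexp w w', hG w', hG' w']

theorem norm_apply_sub_apply_le_min (hGexp : ∀ u v, ‖G u - G v‖ ≤ ρ * ‖u - v‖)
    (hG : ∀ w, ‖G w - w‖ ≤ σ) (hG' : ∀ w, ‖G' w - w‖ ≤ σ) (w w' : E) :
    ‖G w - G' w'‖ ≤ min ρ 1 * ‖w - w'‖ + 2 * σ := by
  calc ‖G w - G' w'‖ ≤ min (ρ * ‖w - w'‖ + 2 * σ) (1 * ‖w - w'‖ + 2 * σ) :=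
        le_min (norm_apply_sub_apply_le_of_expansive hGexp hG hG' w w')
          (by rw [one_mul]; exact norm_apply_sub_apply_le_of_displacement_le hG hG' w w')
    _ = min ρ 1 * ‖w - w'‖ + 2 * σ := by
      rw [min_add_add_right, min_mul_of_nonneg _ _ (norm_nonneg _)]

end GrowthRecursion

/-- Growth recursion, differing-update case: if `G` and `G'` are each `σ`-bounded and
`G` is `ρ`-expansive, then `‖G w - G' w'‖ ≤ min ρ 1 * ‖w - w'‖ + 2σ`; consequently, if
`w_t = G w_{t-1}` and `w'_t = G' w'_{t-1}`, then `δ_t ≤ min ρ 1 * δ_{t-1} + 2σ`. -/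
theorem stmt5 {d : ℕ} (ρ σ : ℝ)
    (G G' : EuclideanSpace ℝ (Fin d) → EuclideanSpace ℝ (Fin d))
    (hGbd : ∀ w, ‖G w - w‖ ≤ σ)
    (hG'bd : ∀ w, ‖G' w - w‖ ≤ σ)
    (hGexp : ∀ u v, ‖G u - G v‖ ≤ ρ * ‖u - v‖) :
    (∀ w w' : EuclideanSpace ℝ (Fin d),
      ‖G w - G' w'‖ ≤ min ρ 1 * ‖w - w'‖ + 2 * σ) ∧
    ∀ (ws ws' : ℕ → EuclideanSpace ℝ (Fin d)) (t : ℕ), 1 ≤ t →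
      ws t = G (ws (t - 1)) → ws' t = G' (ws' (t - 1)) →
      ‖ws t - ws' t‖ ≤ min ρ 1 * ‖ws (t - 1) - ws' (t - 1)‖ + 2 * σ := by
  have step := norm_apply_sub_apply_le_min hGexp hGbd hG'bd
  exact ⟨step, fun ws ws' t _ hw hw' => hw ▸ hw' ▸ step _ _⟩
end

section
/- (ε-differential privacy of the Laplace-type mechanism.) Fix ε > 0 and Δ > 0, and let ν be the probability measure on ℝ^d whose density with respect to Lebesgue measure is proportional to exp(−ε‖κ‖/Δ), where ‖·‖ is the Euclidean norm. Then for any a, b ∈ ℝ^d with ‖a − b‖ ≤ Δ and any measurable set E ⊆ ℝ^d, ν(E − a) ≤ e^ε · ν(E − b). Equivalently, publishing f(S) + κ with κ ~ ν, where f has L₂-sensitivity at most Δ, is ε-differentially private. -/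
open MeasureTheory
open scoped ENNReal

/-! A translate by `v` changes the exponent `-ε ‖κ‖ / Δ` by at most `ε ‖v‖ / Δ ≤ ε`, so the
Laplace density is pointwise at most `e^ε` times its translate. Integrating this over the event
and using translation invariance of Lebesgue measure gives the privacy bound. -/

section TranslateBound

variable {G : Type*} [MeasurableSpace G] [AddGroup G] [MeasurableAdd G]

theorem withDensity_preimage_add_right_le (μ : Measure G) [μ.IsAddRightInvariant] [SFinite μ]
    {g : G → ℝ≥0∞} {c : ℝ≥0∞} (hc : c ≠ ∞) {v : G} (hg : ∀ x, g x ≤ c * g (x + v))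
    (s : Set G) :
    μ.withDensity g ((· + v) ⁻¹' s) ≤ c * μ.withDensity g s := by
  rw [withDensity_apply' _ s, withDensity_apply']
  calc ∫⁻ x in (· + v) ⁻¹' s, g x ∂μ
      ≤ ∫⁻ x in (· + v) ⁻¹' s, c * g (x + v) ∂μ := lintegral_mono hg
    _ = c * ∫⁻ x in (· + v) ⁻¹' s, g (x + v) ∂μ := lintegral_const_mul' _ _ hc
    _ = c * ∫⁻ x in s, g x ∂μ := by
      rw [(measurePreserving_add_right μ v).setLIntegral_comp_preimage_emb
        (measurableEmbedding_addRight v)]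

end TranslateBound

noncomputable def laplaceDensity {E : Type*} [Norm E] (ε Δ : ℝ) (x : E) : ℝ≥0∞ :=
  ENNReal.ofReal (Real.exp (-(ε * ‖x‖) / Δ))

theorem laplaceDensity_le_exp_mul_add {E : Type*} [SeminormedAddGroup E] {ε Δ : ℝ}
    (hε : 0 ≤ ε) {v : E} (hv : ‖v‖ ≤ Δ) (x : E) :
    laplaceDensity ε Δ x ≤ ENNReal.ofReal (Real.exp ε) * laplaceDensity ε Δ (x + v) := by
  rw [laplaceDensity, laplaceDensity, ← ENNReal.ofReal_mul (Real.exp_nonneg _), ← Real.exp_add]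
  refine ENNReal.ofReal_le_ofReal (Real.exp_le_exp.mpr ?_)
  have hratio : (‖x + v‖ - ‖x‖) / Δ ≤ 1 :=
    div_le_one_of_le₀ (by linarith [norm_add_le x v]) ((norm_nonneg v).trans hv)
  have hexp : -(ε * ‖x‖) / Δ = -(ε * ‖x + v‖) / Δ + ε * ((‖x + v‖ - ‖x‖) / Δ) := by ring
  linarith [mul_le_mul_of_nonneg_left hratio hε]

theorem stmt6_general {d : ℕ} (ε Δ : ℝ) (hε : 0 < ε)
    (ν : Measure (EuclideanSpace ℝ (Fin d))) (C : ℝ≥0∞)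
    (hν : ν = C • volume.withDensity
      (fun κ : EuclideanSpace ℝ (Fin d) => ENNReal.ofReal (Real.exp (-(ε * ‖κ‖) / Δ))))
    (a b : EuclideanSpace ℝ (Fin d)) (hab : ‖a - b‖ ≤ Δ)
    (E : Set (EuclideanSpace ℝ (Fin d))) :
    ν {κ | a + κ ∈ E} ≤ ENNReal.ofReal (Real.exp ε) * ν {κ | b + κ ∈ E} := by
  have hshift : {κ | a + κ ∈ E} = (· + (a - b)) ⁻¹' {κ | b + κ ∈ E} := by
    ext κ
    change a + κ ∈ E ↔ b + (κ + (a - b)) ∈ E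
    rw [show b + (κ + (a - b)) = a + κ by abel]
  rw [hν, Measure.smul_apply, Measure.smul_apply, smul_eq_mul, smul_eq_mul, mul_left_comm,
    hshift]
  gcongr
  exact withDensity_preimage_add_right_le volume ENNReal.ofReal_ne_top
    (laplaceDensity_le_exp_mul_add hε.le hab) _

/-- ε-differential privacy of the Laplace-type mechanism: if `ν` is the probability
measure on `ℝ^d` with density proportional to `exp (-ε ‖κ‖ / Δ)` w.r.t. Lebesgue
measure, then for any `a b` with `‖a - b‖ ≤ Δ` and any measurable `E`,
`ν {κ | a + κ ∈ E} ≤ e^ε * ν {κ | b + κ ∈ E}`. -/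
theorem stmt6 {d : ℕ} (ε Δ : ℝ) (hε : 0 < ε) (hΔ : 0 < Δ)
    (ν : Measure (EuclideanSpace ℝ (Fin d))) (C : ℝ≥0∞)
    (hν : ν = C • volume.withDensity
      (fun κ : EuclideanSpace ℝ (Fin d) => ENNReal.ofReal (Real.exp (-(ε * ‖κ‖) / Δ))))
    (hprob : IsProbabilityMeasure ν)
    (a b : EuclideanSpace ℝ (Fin d)) (hab : ‖a - b‖ ≤ Δ)
    (E : Set (EuclideanSpace ℝ (Fin d))) (hE : MeasurableSet E) :
    ν {κ | a + κ ∈ E} ≤ ENNReal.ofReal (Real.exp ε) * ν {κ | b + κ ∈ E} :=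
  stmt6_general ε Δ hε ν C hν a b hab E
end
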